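/- Suppose ŵ_u enforces v: both u and v have non-trivial open intervals, ŵ_u ∈ I_v, and there is a hyperedge S containing both such that v is leftmost in S, or u is leftmost in S and v is leftmost in S \ {u}. If additionally the true weight satisfies w_u ∈ I_v, then v is mandatory (every feasible query set contains v). -/

import Mathlib

/-!
If `v` is left unqueried, its interval stays `(L v, U v)`. Then `v` cannot certify the hyperedge `S`,
because the lower end of `u`'s interval is at most `w u < U v`. Every other vertex `m` ends with its
upper end at least `w m > L v` (either `m = u`, or `L v ≤ L m` because `v` is leftmost in `S \ {u}`),
which exceeds the lower end `L v` of `v`'s interval, so `m` cannot certify `S` either.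
-/

open Finset

/-- Lower endpoint of vertex `v`'s interval after querying the set `Q`. -/
def qlo {V : Type*} [DecidableEq V] (L w : V → ℝ) (Q : Finset V) (v : V) : ℝ :=
  if v ∈ Q then w v else L v

/-- Upper endpoint of vertex `v`'s interval after querying the set `Q`. -/
def qhi {V : Type*} [DecidableEq V] (U w : V → ℝ) (Q : Finset V) (v : V) : ℝ :=
  if v ∈ Q then w v else U v

/-- The query set `Q` suffices to orient the hyperedge `S`: some vertex of `S`
has its (updated) interval weakly below all other (updated) intervals of `S`. -/
def Solves {V : Type*} [DecidableEq V] (L U w : V → ℝ) (Q : Finset V) (S : Finset V) : Prop :=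
  ∃ m ∈ S, ∀ u ∈ S, u ≠ m → qhi U w Q m ≤ qlo L w Q u

section QueriedIntervals

variable {V : Type*} [DecidableEq V] {L U w : V → ℝ} {Q : Finset V} {x : V}

lemma qlo_of_notMem (hx : x ∉ Q) : qlo L w Q x = L x := if_neg hx

lemma qhi_of_notMem (hx : x ∉ Q) : qhi U w Q x = U x := if_neg hx

lemma qlo_le_self (h : L x ≤ w x) : qlo L w Q x ≤ w x := by
  unfold qlo
  split_ifs
  exacts [le_rfl, h]

lemma self_le_qhi (h : w x ≤ U x) : w x ≤ qhi U w Q x := by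
  unfold qhi
  split_ifs
  exacts [le_rfl, h]

end QueriedIntervals

lemma mem_of_solves_of_leftmost_erase {V : Type*} [DecidableEq V] {L U w : V → ℝ}
    {Q S : Finset V} {u v : V} (hw : ∀ x ∈ S, w x ∈ Set.Ioo (L x) (U x))
    (huS : u ∈ S) (hvS : v ∈ S) (huv : u ≠ v) (hwu : w u ∈ Set.Ioo (L v) (U v))
    (hleft : ∀ x ∈ S.erase u, L v ≤ L x) (hsolves : Solves L U w Q S) : v ∈ Q := by
  by_contra hv
  obtain ⟨m, hmS, hm⟩ := hsolves
  by_cases hmv : m = v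
  · subst hmv
    have hbelow := hm u huS huv
    rw [qhi_of_notMem hv] at hbelow
    linarith [qlo_le_self (Q := Q) (hw u huS).1.le, hwu.2]
  · have hbelow := hm v hvS (Ne.symm hmv)
    rw [qlo_of_notMem hv] at hbelow
    have hwm : L v < w m := by
      by_cases hmu : m = u
      · exact hmu ▸ hwu.1
      · exact (hleft m (mem_erase.2 ⟨hmu, hmS⟩)).trans_lt (hw m hmS).1
    linarith [self_le_qhi (Q := Q) (hw m hmS).2.le]

theorem stmt16_general {V : Type*} [DecidableEq V] (L U w : V → ℝ)
    (hw : ∀ x : V, w x ∈ Set.Ioo (L x) (U x))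
    (E : Finset (Finset V)) (u v : V) (huv : u ≠ v)
    (hS : ∃ S ∈ E, u ∈ S ∧ v ∈ S ∧
      ((∀ x ∈ S, L v ≤ L x) ∨
       ((∀ x ∈ S, L u ≤ L x) ∧ ∀ x ∈ S.erase u, L v ≤ L x)))
    (hwu : w u ∈ Set.Ioo (L v) (U v)) :
    ∀ Q : Finset V, (∀ S ∈ E, Solves L U w Q S) → v ∈ Q := by
  intro Q hQ
  obtain ⟨S, hSE, huS, hvS, hcase⟩ := hS
  have hleft : ∀ x ∈ S.erase u, L v ≤ L x :=
    hcase.elim (fun hv x hx => hv x (mem_of_mem_erase hx)) And.right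
  exact mem_of_solves_of_leftmost_erase (fun x _ => hw x) huS hvS huv hwu hleft (hQ S hSE)

theorem stmt16 {V : Type*} [DecidableEq V] (L U w pw : V → ℝ)
    (hw : ∀ x : V, w x ∈ Set.Ioo (L x) (U x))
    (hpw : ∀ x : V, pw x ∈ Set.Ioo (L x) (U x))
    (E : Finset (Finset V)) (u v : V) (huv : u ≠ v)
    (hnontrivu : L u < U u) (hnontrivv : L v < U v)
    (henf : pw u ∈ Set.Ioo (L v) (U v))
    (hS : ∃ S ∈ E, u ∈ S ∧ v ∈ S ∧
      ((∀ x ∈ S, L v ≤ L x) ∨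
       ((∀ x ∈ S, L u ≤ L x) ∧ ∀ x ∈ S.erase u, L v ≤ L x)))
    (hwu : w u ∈ Set.Ioo (L v) (U v)) :
    ∀ Q : Finset V, (∀ S ∈ E, Solves L U w Q S) → v ∈ Q :=
  stmt16_general L U w hw E u v huv hS hwu
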